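/- arXiv:1701.02693 — 4 statements merged into one kernel-verified Lean document; each statement's English description precedes it below -/
import Mathlib

section
/- Let 1/2 < y < √3/2 and let W be a finite set of points in the horizontal strip ℝ × [0, y). Define a relation ≺ on W by u ≺ v iff u_x < v_x (first coordinates) and the Euclidean distance d(u,v) > 1. Then ≺ is a strict partial order on W (irreflexive and transitive), and for any two distinct points u, v ∈ W, d(u,v) > 1 if and only if u and v are comparable under ≺. Consequently the geometric graph on W with threshold 1 is a co-comparability graph. Moreover, if u ≺ v then v_x > u_x + 1/2. -/
open Filter MeasureTheory SimpleGraph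

set_option linter.unusedVariables false

lemma strip_dist_sq (u v : EuclideanSpace ℝ (Fin 2)) :
    dist u v ^ 2 = (u 0 - v 0) ^ 2 + (u 1 - v 1) ^ 2 := by
  rw [EuclideanSpace.dist_eq, Real.sq_sqrt (by positivity)]
  simp [Fin.sum_univ_two, Real.dist_eq, sq_abs]

/-- Points of a horizontal strip of height `y < √3/2`, ordered by `u ≺ v` iff
`u` has smaller first coordinate and `dist u v > 1`, form a strict partial order in
which comparability is exactly non-adjacency in the unit disk graph; moreover
`u ≺ v` forces `v` to lie more than `1/2` to the right of `u`. -/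
theorem strip_co_comparability (y : ℝ) (hy₁ : 1 / 2 < y) (hy₂ : y < Real.sqrt 3 / 2)
    (W : Finset (EuclideanSpace ℝ (Fin 2)))
    (hW : ∀ p ∈ W, 0 ≤ p 1 ∧ p 1 < y)
    (prec : EuclideanSpace ℝ (Fin 2) → EuclideanSpace ℝ (Fin 2) → Prop)
    (hprec : ∀ u v, prec u v ↔ u 0 < v 0 ∧ 1 < dist u v) :
    (∀ u ∈ W, ¬ prec u u) ∧
    (∀ u ∈ W, ∀ v ∈ W, ∀ w ∈ W, prec u v → prec v w → prec u w) ∧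
    (∀ u ∈ W, ∀ v ∈ W, u ≠ v → (1 < dist u v ↔ prec u v ∨ prec v u)) ∧
    (∀ u ∈ W, ∀ v ∈ W, prec u v → u 0 + 1 / 2 < v 0) := by
  have hy2sq : y ^ 2 < 3 / 4 := by
    have h3 : (Real.sqrt 3) ^ 2 = 3 := Real.sq_sqrt (by norm_num)
    nlinarith [Real.sqrt_nonneg 3]
  -- vertical separation bound
  have hvert : ∀ u ∈ W, ∀ v ∈ W, (u 1 - v 1) ^ 2 < 3 / 4 := by
    intro u hu v hv
    obtain ⟨hu0, hu1⟩ := hW u hu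
    obtain ⟨hv0, hv1⟩ := hW v hv
    nlinarith
  -- key: prec u v → u 0 + 1/2 < v 0
  have hhalf : ∀ u ∈ W, ∀ v ∈ W, prec u v → u 0 + 1 / 2 < v 0 := by
    intro u hu v hv hp
    rw [hprec] at hp
    obtain ⟨hx, hd⟩ := hp
    have hsq := strip_dist_sq u v
    have hv2 := hvert u hu v hv
    have hd2 : 1 < dist u v ^ 2 := by nlinarith [dist_nonneg (x := u) (y := v)]
    nlinarith
  refine ⟨?_, ?_, ?_, hhalf⟩
  · intro u hu hp
    rw [hprec] at hp
    exact lt_irrefl _ hp.1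
  · intro u hu v hv w hw huv hvw
    have h1 := hhalf u hu v hv huv
    have h2 := hhalf v hv w hw hvw
    rw [hprec]
    constructor
    · linarith
    · have hsq := strip_dist_sq u w
      have hd : 1 < u 0 - w 0 ∨ 1 < w 0 - u 0 := Or.inr (by linarith)
      nlinarith [dist_nonneg (x := u) (y := w), sq_nonneg (u 1 - w 1),
        sq_nonneg (w 0 - u 0 - 1), dist_nonneg (x := u) (y := w)]
  · intro u hu v hv hne
    constructor
    · intro hd
      rcases lt_trichotomy (u 0) (v 0) with h | h | h
      · exact Or.inl ((hprec u v).2 ⟨h, hd⟩)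
      · exfalso
        have hsq := strip_dist_sq u v
        have hv2 := hvert u hu v hv
        have hd2 : 1 < dist u v ^ 2 := by nlinarith [dist_nonneg (x := u) (y := v)]
        nlinarith
      · exact Or.inr ((hprec v u).2 ⟨h, by rwa [_root_.dist_comm]⟩)
    · rintro (hp | hp)
      · exact ((hprec u v).1 hp).2
      · rw [_root_.dist_comm u v]; exact ((hprec v u).1 hp).2
end

section
/- Let d ≥ 1 and let G be a geometric graph in ℝ^d. Then χ_c(G) ≤ 2·(⌈√d⌉ + 1)^d, and moreover 2·(⌈√d⌉ + 1)^d < 2·e^{2√d}·d^{d/2}. -/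
open Filter MeasureTheory SimpleGraph

set_option linter.unusedVariables false


/-- A clique colouring with `k` colours: no maximal clique containing at least
two vertices is monochromatic. -/
def IsCliqueColouring {V : Type*} {k : ℕ} (G : SimpleGraph V) (c : V → Fin k) : Prop :=
  ∀ S : Set V, Maximal G.IsClique S → 2 ≤ S.ncard → ¬ ∃ a : Fin k, ∀ v ∈ S, c v = a

/-- The clique chromatic number: the least number of colours in a clique colouring. -/
noncomputable def cliqueChromNum {V : Type*} (G : SimpleGraph V) : ℕ :=
  sInf {k : ℕ | ∃ c : V → Fin k, IsCliqueColouring G c}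

/-- `G` is a geometric graph in `ℝ^d`: the vertices can be placed at points of `ℝ^d`
so that distinct vertices are adjacent iff their Euclidean distance is at most some
threshold `r > 0`. -/
def IsGeometricIn {V : Type*} (G : SimpleGraph V) (d : ℕ) : Prop :=
  ∃ (x : V → EuclideanSpace ℝ (Fin d)) (r : ℝ), 0 < r ∧
    ∀ u v : V, G.Adj u v ↔ (u ≠ v ∧ dist (x u) (x v) ≤ r)

/-!
Cut `ℝ^d` into half-open cubes of side `s = r / N`, where `N = ⌈√d⌉`, so that each cube has
diameter at most `r` and is a clique. Colour a vertex by the index of its cube modulo `N + 1`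
together with one bit, set exactly on a chosen leader of each occupied cube. Two cubes of the
same colour are more than `N s = r` apart, so a monochromatic maximal clique lies in a single
cube; by maximality it contains the cube's leader, so its bit is set, and then it contains only
that leader.

For the numerical bound, `⌈√d⌉ + 1 < √d + 2 ≤ √d e^{2/√d}`; raise this to the `d`-th power.
-/

theorem cliqueChromNum_le_card {V C : Type*} [Fintype C] (G : SimpleGraph V) (c : V → C)
    (hc : ∀ S : Set V, Maximal G.IsClique S → 2 ≤ S.ncard → ¬ ∃ a, ∀ v ∈ S, c v = a) :
    cliqueChromNum G ≤ Fintype.card C := by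
  refine Nat.sInf_le ⟨fun v => Fintype.equivFin C (c v), fun S hS h2 ⟨a, ha⟩ => ?_⟩
  refine hc S hS h2 ⟨(Fintype.equivFin C).symm a, fun v hv => ?_⟩
  simp [← ha v hv]

theorem cliqueChromNum_le_two_mul_card {V ι K : Type*} [Fintype K] (G : SimpleGraph V)
    (cell : V → ι) (κ : ι → K)
    (adj_of_cell_eq : ∀ u v, u ≠ v → cell u = cell v → G.Adj u v)
    (cell_eq_of_adj : ∀ u v, G.Adj u v → κ (cell u) = κ (cell v) → cell u = cell v) :
    cliqueChromNum G ≤ 2 * Fintype.card K := by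
  classical
  set leader : V → V := fun v => Set.rangeSplitting cell ⟨cell v, v, rfl⟩
  have cell_leader (v : V) : cell (leader v) = cell v := Set.apply_rangeSplitting cell _
  have leader_eq {u v : V} (h : cell u = cell v) : leader u = leader v := by
    simp only [leader, h]
  rw [mul_comm, ← Fintype.card_bool, ← Fintype.card_prod]
  refine cliqueChromNum_le_card G (fun v => (κ (cell v), decide (leader v = v)))
    fun S hS h2 ⟨⟨k, b⟩, hcol⟩ => ?_
  simp only [Prod.mk.injEq] at hcol
  obtain ⟨u, v, hu, hv, huv⟩ :=
    (Set.one_lt_ncard_iff (Set.finite_of_ncard_pos (s := S) (by omega))).1 (by omega)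
  have same_cell : ∀ w ∈ S, cell w = cell u := by
    intro w hw
    by_cases hwu : w = u
    · rw [hwu]
    · exact cell_eq_of_adj w u (hS.1 hw hu hwu) ((hcol w hw).1.trans (hcol u hu).1.symm)
  have leader_mem : leader u ∈ S := hS.mem_of_prop_insert <| hS.1.insert fun w hw hne =>
    adj_of_cell_eq _ _ hne ((cell_leader u).trans (same_cell w hw).symm)
  have bit_set : b = true := by
    simpa [← (hcol _ leader_mem).2] using leader_eq (cell_leader u)
  have is_leader : ∀ w ∈ S, leader w = w := fun w hw => by simpa [bit_set] using (hcol w hw).2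
  exact huv <| calc
    u = leader u := (is_leader u hu).symm
    _ = leader v := leader_eq (same_cell v hv).symm
    _ = v := is_leader v hv

theorem abs_floor_sub_floor_sub_lt_one {R : Type*} [Ring R] [LinearOrder R] [IsOrderedRing R]
    [FloorRing R] (a b : R) : |((⌊a⌋ - ⌊b⌋ : ℤ) : R) - (a - b)| < 1 := by
  have : ((⌊a⌋ - ⌊b⌋ : ℤ) : R) - (a - b) = Int.fract b - Int.fract a := by
    simp only [Int.fract, Int.cast_sub]
    abel
  rw [this]
  exact abs_sub_lt_of_nonneg_of_lt (Int.fract_nonneg b) (Int.fract_lt_one b)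
    (Int.fract_nonneg a) (Int.fract_lt_one a)

namespace EuclideanSpace

variable {ι : Type*} [Fintype ι]

/-- The index of the half-open cube `∏ i, [s fᵢ, s (fᵢ + 1))` of side `s` containing `p`. -/
noncomputable def cubeIndex (s : ℝ) (p : EuclideanSpace ℝ ι) (i : ι) : ℤ := ⌊p i / s⌋

theorem dist_le_sqrt_card_mul {p q : EuclideanSpace ℝ ι} {s : ℝ} (hs : 0 ≤ s)
    (h : ∀ i, dist (p i) (q i) ≤ s) : dist p q ≤ √(Fintype.card ι) * s := by
  rw [EuclideanSpace.dist_eq, ← Real.sqrt_sq hs, ← Real.sqrt_mul (Nat.cast_nonneg _)]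
  gcongr
  calc ∑ i, dist (p i) (q i) ^ 2 ≤ ∑ _i : ι, s ^ 2 := by gcongr with i; exact h i
    _ = Fintype.card ι * s ^ 2 := by simp

theorem dist_le_of_cubeIndex_eq {p q : EuclideanSpace ℝ ι} {s : ℝ} (hs : 0 < s)
    (h : cubeIndex s p = cubeIndex s q) : dist p q ≤ √(Fintype.card ι) * s := by
  refine dist_le_sqrt_card_mul hs.le fun i => ?_
  have := Int.abs_sub_lt_one_of_floor_eq_floor (congrFun h i)
  rw [← sub_div, abs_div, abs_of_pos hs, div_lt_one hs] at this
  exact (Real.dist_eq _ _).trans_le this.le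

theorem lt_dist_of_cubeIndex_modEq {p q : EuclideanSpace ℝ ι} {s : ℝ} {n : ℕ} (hs : 0 < s)
    (hne : cubeIndex s p ≠ cubeIndex s q)
    (hmod : ∀ i, cubeIndex s p i ≡ cubeIndex s q i [ZMOD n]) :
    (n - 1 : ℝ) * s < dist p q := by
  obtain ⟨i, hi⟩ := Function.ne_iff.1 hne
  have hn : (n : ℤ) ≤ |cubeIndex s q i - cubeIndex s p i| :=
    Int.le_of_dvd (abs_pos.2 (sub_ne_zero.2 hi.symm)) ((dvd_abs _ _).2 (hmod i).dvd)
  have hn' : (n : ℝ) ≤ |((⌊q i / s⌋ - ⌊p i / s⌋ : ℤ) : ℝ)| := by exact_mod_cast hn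
  have hgap : (n - 1 : ℝ) < |q i / s - p i / s| := by
    linarith [abs_floor_sub_floor_sub_lt_one (q i / s) (p i / s),
      abs_sub_abs_le_abs_sub ((⌊q i / s⌋ - ⌊p i / s⌋ : ℤ) : ℝ) (q i / s - p i / s)]
  calc (n - 1 : ℝ) * s < |q i / s - p i / s| * s := mul_lt_mul_of_pos_right hgap hs
    _ = dist (q i) (p i) := by
      rw [Real.dist_eq, ← sub_div, abs_div, abs_of_pos hs, div_mul_cancel₀ _ hs.ne']
    _ ≤ dist q p := PiLp.dist_apply_le _ _ _
    _ = dist p q := dist_comm _ _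

end EuclideanSpace

open EuclideanSpace in
theorem IsGeometricIn.cliqueChromNum_le {V : Type*} {G : SimpleGraph V} {d N : ℕ}
    (hG : IsGeometricIn G d) (hN : 0 < N) (hdN : √(d : ℝ) ≤ N) :
    cliqueChromNum G ≤ 2 * (N + 1) ^ d := by
  obtain ⟨x, r, hr, hadj⟩ := hG
  set s := r / N
  have hs : 0 < s := by positivity
  have hNs : N * s = r := mul_div_cancel₀ _ (by positivity)
  have := cliqueChromNum_le_two_mul_card G (fun v => cubeIndex s (x v))
    (fun f i => (f i : ZMod (N + 1))) ?_ ?_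
  · simpa [ZMod.card] using this
  · intro u v huv hcell
    refine (hadj u v).2 ⟨huv, (dist_le_of_cubeIndex_eq hs hcell).trans ?_⟩
    rw [← hNs, Fintype.card_fin]
    gcongr
  · intro u v huv hκ
    by_contra hne
    have := lt_dist_of_cubeIndex_modEq hs hne fun i =>
      (ZMod.intCast_eq_intCast_iff _ _ _).1 (congrFun hκ i)
    rw [Nat.cast_add_one, add_sub_cancel_right, hNs] at this
    exact this.not_ge ((hadj u v).1 huv).2

theorem add_le_mul_exp_div {t : ℝ} (ht : 0 < t) (a : ℝ) : t + a ≤ t * Real.exp (a / t) :=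
  calc t + a = t * (a / t + 1) := by field_simp; ring
    _ ≤ t * Real.exp (a / t) := by gcongr; exact Real.add_one_le_exp _

theorem two_mul_ceil_sqrt_add_one_pow_lt {d : ℕ} (hd : 1 ≤ d) :
    ((2 * (⌈√(d : ℝ)⌉₊ + 1) ^ d : ℕ) : ℝ) <
      2 * Real.exp (2 * √(d : ℝ)) * (d : ℝ) ^ ((d : ℝ) / 2) := by
  have hd0 : (0 : ℝ) < d := by exact_mod_cast hd
  have ht : 0 < √(d : ℝ) := Real.sqrt_pos.2 hd0
  have hbase : (⌈√(d : ℝ)⌉₊ + 1 : ℝ) < √d * Real.exp (2 / √d) :=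
    calc (⌈√(d : ℝ)⌉₊ + 1 : ℝ) < √d + 1 + 1 := by gcongr; exact Nat.ceil_lt_add_one ht.le
      _ ≤ √d * Real.exp (2 / √d) := by
        rw [add_assoc, one_add_one_eq_two]; exact add_le_mul_exp_div ht 2
  have hexp : (d : ℝ) * (2 / √d) = 2 * √d := by
    field_simp
    rw [Real.sq_sqrt hd0.le]
  have hpow :
      (√(d : ℝ) * Real.exp (2 / √d)) ^ d = (d : ℝ) ^ ((d : ℝ) / 2) * Real.exp (2 * √d) := by
    rw [mul_pow, ← Real.exp_nat_mul, hexp, Real.sqrt_eq_rpow, ← Real.rpow_natCast,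
      ← Real.rpow_mul hd0.le, one_div_mul_eq_div]
  calc ((2 * (⌈√(d : ℝ)⌉₊ + 1) ^ d : ℕ) : ℝ) = 2 * (⌈√(d : ℝ)⌉₊ + 1 : ℝ) ^ d := by
        push_cast; ring
    _ < 2 * (√d * Real.exp (2 / √d)) ^ d := by gcongr
    _ = 2 * Real.exp (2 * √(d : ℝ)) * (d : ℝ) ^ ((d : ℝ) / 2) := by rw [hpow]; ring

theorem cliqueChromNum_le_of_geometric_general {V : Type*} (d : ℕ) (hd : 1 ≤ d)
    (G : SimpleGraph V) (hG : IsGeometricIn G d) :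
    cliqueChromNum G ≤ 2 * (⌈Real.sqrt d⌉₊ + 1) ^ d ∧
    ((2 * (⌈Real.sqrt d⌉₊ + 1) ^ d : ℕ) : ℝ) <
      2 * Real.exp (2 * Real.sqrt d) * (d : ℝ) ^ ((d : ℝ) / 2) :=
  have hd0 : (0 : ℝ) < d := by exact_mod_cast hd
  ⟨hG.cliqueChromNum_le (Nat.ceil_pos.2 (Real.sqrt_pos.2 hd0)) (Nat.le_ceil _),
    two_mul_ceil_sqrt_add_one_pow_lt hd⟩

/-- If `G` is a geometric graph in `ℝ^d` then `χ_c(G) ≤ 2(⌈√d⌉+1)^d`, and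
`2(⌈√d⌉+1)^d < 2 e^{2√d} d^{d/2}`. -/
theorem cliqueChromNum_le_of_geometric {V : Type*} [Fintype V] (d : ℕ) (hd : 1 ≤ d)
    (G : SimpleGraph V) (hG : IsGeometricIn G d) :
    cliqueChromNum G ≤ 2 * (⌈Real.sqrt d⌉₊ + 1) ^ d ∧
    ((2 * (⌈Real.sqrt d⌉₊ + 1) ^ d : ℕ) : ℝ) <
      2 * Real.exp (2 * Real.sqrt d) * (d : ℝ) ^ ((d : ℝ) / 2) :=
  cliqueChromNum_le_of_geometric_general d hd G hG
end

section
/- Let G be a graph with vertex set {1,…,n} where n ≥ 2, and let ε > 0. Then there exist points x^1, …, x^n ∈ ℝ^n such that for each i one has Σ_{k=1}^n x^i_k = 1 and ‖x^i − e^i‖ < ε (where e^i is the i-th standard basis vector of ℝ^n), and such that for all i ≠ j the Euclidean distance satisfies ‖x^i − x^j‖ < √2 if ij is an edge of G and ‖x^i − x^j‖ > √2 if ij is not an edge of G. -/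
/-!
Put `x i = e i + P (t ^ 2 • e i + t • a i)`, where `a i` is the `i`-th row of the adjacency
matrix and `P` is the orthogonal projection onto the hyperplane of vectors with coordinate sum `0`.
Each `x i` has coordinate sum `1` and tends to `e i` as `t → 0`. Since `P` fixes `e i - e j`,
`‖x i - x j‖² = 2 (1 + t²)² - 4 t (1 + t²) [i ~ j] + t² ‖P (a i - a j)‖²`, which exceeds `2` for a
non-edge as soon as `t ≠ 0`, and is below `2` for an edge and small `t > 0`, where the linear
term `-4 t` dominates.
-/

open Filter SimpleGraph Topology InnerProductSpace
open EuclideanSpace (single)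

noncomputable section

variable {ι : Type*} [Fintype ι]

def coordSumZero (ι : Type*) [Fintype ι] : Submodule ℝ (EuclideanSpace ℝ ι) :=
  (ℝ ∙ WithLp.toLp 2 fun _ => 1)ᗮ

theorem mem_coordSumZero {v : EuclideanSpace ℝ ι} : v ∈ coordSumZero ι ↔ ∑ k, v k = 0 := by
  simp [coordSumZero, Submodule.mem_orthogonal_singleton_iff_inner_right, PiLp.inner_apply]

variable [DecidableEq ι] (G : SimpleGraph ι) [DecidableRel G.Adj]

def adjRow (i : ι) : EuclideanSpace ℝ ι := WithLp.toLp 2 (G.adjMatrix ℝ i)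

theorem inner_single_sub_single_adjRow_sub (i j : ι) :
    ⟪single i 1 - single j 1, adjRow G i - adjRow G j⟫_ℝ = -2 * G.adjMatrix ℝ i j := by
  by_cases hG : G.Adj i j <;>
    norm_num [inner_sub_left, inner_sub_right, EuclideanSpace.inner_single_left, adjRow,
      G.adj_comm j i, hG]

theorem norm_single_sub_single_sq {i j : ι} (hij : i ≠ j) :
    ‖single i (1 : ℝ) - single j 1‖ ^ 2 = 2 := by
  norm_num [norm_sub_sq_real, EuclideanSpace.inner_single_left, hij.symm]

def graphPoint (t : ℝ) (i : ι) : EuclideanSpace ℝ ι :=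
  single i 1 + (coordSumZero ι).starProjection (t ^ 2 • single i 1 + t • adjRow G i)

theorem sum_graphPoint (t : ℝ) (i : ι) : ∑ k, graphPoint G t i k = 1 := by
  have h := mem_coordSumZero.1 <|
    (coordSumZero ι).starProjection_apply_mem (t ^ 2 • single i 1 + t • adjRow G i)
  rw [graphPoint]
  simp only [PiLp.add_apply, Finset.sum_add_distrib, h]
  simp

theorem tendsto_graphPoint (i : ι) :
    Tendsto (fun t => graphPoint G t i) (𝓝 0) (𝓝 (single i 1)) := by
  have hcont : Continuous fun t : ℝ => graphPoint G t i := by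
    unfold graphPoint; fun_prop
  simpa [graphPoint] using hcont.tendsto 0

theorem starProjection_single_sub_single (i j : ι) :
    (coordSumZero ι).starProjection (single i 1 - single j 1) =
      single i (1 : ℝ) - single j 1 := by
  rw [Submodule.starProjection_eq_self_iff, mem_coordSumZero]
  simp [Finset.sum_sub_distrib]

theorem graphPoint_sub (t : ℝ) (i j : ι) :
    graphPoint G t i - graphPoint G t j =
      (1 + t ^ 2) • (single i 1 - single j 1) +
        t • (coordSumZero ι).starProjection (adjRow G i - adjRow G j) := by
  rw [graphPoint, graphPoint, add_sub_add_comm, ← map_sub, add_sub_add_comm, ← smul_sub,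
    ← smul_sub, map_add, map_smul, map_smul, starProjection_single_sub_single]
  module

theorem dist_graphPoint_sq {i j : ι} (hij : i ≠ j) (t : ℝ) :
    dist (graphPoint G t i) (graphPoint G t j) ^ 2 =
      2 * (1 + t ^ 2) ^ 2 - 4 * t * (1 + t ^ 2) * G.adjMatrix ℝ i j +
        t ^ 2 * ‖(coordSumZero ι).starProjection (adjRow G i - adjRow G j)‖ ^ 2 := by
  have hinner : ⟪single i (1 : ℝ) - single j 1,
      (coordSumZero ι).starProjection (adjRow G i - adjRow G j)⟫_ℝ = -2 * G.adjMatrix ℝ i j := by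
    rw [← Submodule.inner_starProjection_left_eq_right, starProjection_single_sub_single,
      inner_single_sub_single_adjRow_sub]
  rw [dist_eq_norm, graphPoint_sub, norm_add_sq_real, norm_smul, norm_smul, mul_pow, mul_pow,
    norm_single_sub_single_sq hij, real_inner_smul_left, real_inner_smul_right, hinner,
    Real.norm_eq_abs, Real.norm_eq_abs, sq_abs, sq_abs]
  ring

theorem sqrt_two_lt_dist_graphPoint {i j : ι} (hij : i ≠ j) (hG : ¬ G.Adj i j) {t : ℝ}
    (ht : t ≠ 0) : √2 < dist (graphPoint G t i) (graphPoint G t j) := by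
  rw [← Real.sqrt_sq dist_nonneg, Real.sqrt_lt_sqrt_iff zero_le_two, dist_graphPoint_sq G hij,
    adjMatrix_apply, if_neg hG]
  have ht2 : 0 < t ^ 2 := by positivity
  nlinarith [sq_nonneg ‖(coordSumZero ι).starProjection (adjRow G i - adjRow G j)‖]

theorem eventually_dist_graphPoint_lt_sqrt_two {i j : ι} (hG : G.Adj i j) :
    ∀ᶠ t in 𝓝[>] 0, dist (graphPoint G t i) (graphPoint G t j) < √2 := by
  set M := ‖(coordSumZero ι).starProjection (adjRow G i - adjRow G j)‖ ^ 2
  have hcont : Continuous fun t : ℝ => 4 * t + 2 * t ^ 3 - 4 * t ^ 2 + t * M := by fun_prop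
  have hsmall : ∀ᶠ t in 𝓝 0, 4 * t + 2 * t ^ 3 - 4 * t ^ 2 + t * M < 4 :=
    hcont.continuousAt.eventually_lt continuousAt_const (by simp)
  filter_upwards [nhdsWithin_le_nhds hsmall, self_mem_nhdsWithin] with t ht (htpos : 0 < t)
  rw [← Real.sqrt_sq dist_nonneg, Real.sqrt_lt_sqrt_iff (sq_nonneg _), dist_graphPoint_sq G hG.ne,
    adjMatrix_apply, if_pos hG]
  -- the left side minus `2` is `t * (4 * t + 2 * t ^ 3 - 4 * t ^ 2 + t * M - 4)`
  nlinarith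

end

theorem exists_points_realising_graph_general (n : ℕ) (G : SimpleGraph (Fin n))
    (ε : ℝ) (hε : 0 < ε) :
    ∃ x : Fin n → EuclideanSpace ℝ (Fin n),
      (∀ i, (∑ k, x i k) = 1 ∧ dist (x i) (EuclideanSpace.single i (1 : ℝ)) < ε) ∧
      (∀ i j, i ≠ j →
        (G.Adj i j → dist (x i) (x j) < Real.sqrt 2) ∧
        (¬ G.Adj i j → Real.sqrt 2 < dist (x i) (x j))) := by
  classical
  have hclose : ∀ᶠ t in 𝓝[>] 0, ∀ i, dist (graphPoint G t i) (single i 1) < ε :=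
    eventually_all.2 fun i =>
      nhdsWithin_le_nhds (Metric.tendsto_nhds.1 (tendsto_graphPoint G i) ε hε)
  have hedge : ∀ᶠ t in 𝓝[>] 0, ∀ i j, G.Adj i j →
      dist (graphPoint G t i) (graphPoint G t j) < √2 :=
    eventually_all.2 fun i => eventually_all.2 fun j =>
      eventually_imp_distrib_left.2 (eventually_dist_graphPoint_lt_sqrt_two G)
  obtain ⟨t, ⟨hclose, hedge⟩, ht⟩ := ((hclose.and hedge).and self_mem_nhdsWithin).exists
  exact ⟨graphPoint G t, fun i => ⟨sum_graphPoint G t i, hclose i⟩, fun i j hij =>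
    ⟨hedge i j, fun hG => sqrt_two_lt_dist_graphPoint G hij hG ht.ne'⟩⟩

/-- For every graph on `{1,…,n}` (`n ≥ 2`) and every `ε > 0` there are points
`x^1, …, x^n` of `ℝ^n`, each with coordinate sum `1` and within distance `ε` of the
corresponding standard basis vector, such that distances corresponding to edges are
`< √2` and distances corresponding to non-edges are `> √2`. -/
theorem exists_points_realising_graph (n : ℕ) (hn : 2 ≤ n) (G : SimpleGraph (Fin n))
    (ε : ℝ) (hε : 0 < ε) :
    ∃ x : Fin n → EuclideanSpace ℝ (Fin n),
      (∀ i, (∑ k, x i k) = 1 ∧ dist (x i) (EuclideanSpace.single i (1 : ℝ)) < ε) ∧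
      (∀ i j, i ≠ j →
        (G.Adj i j → dist (x i) (x j) < Real.sqrt 2) ∧
        (¬ G.Adj i j → Real.sqrt 2 < dist (x i) (x j))) :=
  exists_points_realising_graph_general n G ε hε
end

section
/- Every finite simple graph G on n ≥ 1 vertices satisfies χ_c(G) ≤ 2·√n. -/
open Filter MeasureTheory SimpleGraph

set_option linter.unusedVariables false

/-!
Put `s = ⌊√n⌋` and colour by recursion on the vertex set `A`, picking any vertex `v`. If `v` has at
least `s` neighbours in `A`, colour `A` minus the closed neighbourhood `N[v]` first and give the
neighbours of `v` one new colour. A maximal clique of `A` meeting `N[v]` then contains either `v`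
and a neighbour, or, by maximality, a neighbour and a vertex outside `N[v]`, so it is not
monochromatic. Otherwise colour `A - v` first and give `v` a colour not used on its neighbours,
which exists below `deg v + 1 ≤ min(s, |A|)`. A new colour thus costs `s + 1` vertices, and the
greedy colours stay below `min(s, n)`, so `K + 1` colours suffice with `K (s + 1) ≤ n + s²`,
whence `K + 1 ≤ 2√n`.
-/

open Finset

lemma Finset.exists_le_card_notMem (T : Finset ℕ) : ∃ x ≤ #T, x ∉ T := by
  obtain ⟨x, hx, hxT⟩ := exists_mem_notMem_of_card_lt_card (s := T) (t := range (#T + 1))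
    (by simp)
  exact ⟨x, Nat.lt_succ_iff.1 (mem_range.1 hx), hxT⟩

namespace SimpleGraph

variable {V α : Type*} (G : SimpleGraph V)

/-- `c` is a clique colouring of the subgraph of `G` induced on `A`. -/
def IsCliqueColouringOn (A : Set V) (c : V → α) : Prop :=
  ∀ ⦃S : Set V⦄, Maximal (fun T ↦ T ⊆ A ∧ G.IsClique T) S → S.Nontrivial →
    ∃ u ∈ S, ∃ w ∈ S, c u ≠ c w

variable {G} {A : Set V} {c c' : V → α} {v : V}

lemma isCliqueColouringOn_empty : G.IsCliqueColouringOn ∅ c := by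
  intro S hS hS2
  obtain rfl := Set.subset_empty_iff.1 hS.prop.1
  exact absurd hS2 Set.not_nontrivial_empty

lemma IsCliqueColouringOn.congr (hc : G.IsCliqueColouringOn A c) (h : ∀ u ∈ A, c' u = c u) :
    G.IsCliqueColouringOn A c' := by
  intro S hS hS2
  obtain ⟨u, hu, w, hw, hne⟩ := hc hS hS2
  exact ⟨u, hu, w, hw, by rwa [h u (hS.prop.1 hu), h w (hS.prop.1 hw)]⟩

lemma IsCliqueColouringOn.update [DecidableEq V] (hc : G.IsCliqueColouringOn (A \ {v}) c) {x : α}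
    (hx : ∀ u ∈ A, G.Adj v u → c u ≠ x) : G.IsCliqueColouringOn A (Function.update c v x) := by
  intro S hS hS2
  by_cases hvS : v ∈ S
  · obtain ⟨u, hu, huv⟩ := hS2.exists_ne v
    refine ⟨u, hu, v, hvS, ?_⟩
    rw [Function.update_of_ne huv, Function.update_self]
    exact hx u (hS.prop.1 hu) (hS.prop.2 hvS hu huv.symm)
  · have hSA : S ⊆ A \ {v} := fun u hu ↦ ⟨hS.prop.1 hu, fun huv ↦ hvS (huv ▸ hu)⟩
    obtain ⟨u, hu, w, hw, hne⟩ :=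
      hc (hS.mono (fun T hT ↦ ⟨hT.1.trans Set.sdiff_subset, hT.2⟩) ⟨hSA, hS.prop.2⟩) hS2
    refine ⟨u, hu, w, hw, ?_⟩
    rwa [Function.update_of_ne (hSA hu).2, Function.update_of_ne (hSA hw).2]

lemma IsCliqueColouringOn.of_diff_insert_neighborSet {k : α}
    (hc : G.IsCliqueColouringOn (A \ insert v (G.neighborSet v)) c) (hvA : v ∈ A)
    (hk : ∀ u ∈ A, c u = k ↔ G.Adj v u) : G.IsCliqueColouringOn A c := by
  intro S hS hS2
  have hSA := hS.prop.1
  by_cases hvS : v ∈ S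
  · obtain ⟨u, hu, huv⟩ := hS2.exists_ne v
    refine ⟨u, hu, v, hvS, ?_⟩
    rw [(hk u (hSA hu)).2 (hS.prop.2 hvS hu huv.symm), ne_comm, Ne, hk v hvA]
    exact G.loopless.irrefl v
  by_cases hN : ∃ u ∈ S, G.Adj v u
  · obtain ⟨u, hu, hvu⟩ := hN
    -- otherwise `insert v S` would be a larger clique inside `A`
    have hSN : ¬ ∀ w ∈ S, G.Adj v w := fun hall ↦
      hvS (hS.mem_of_prop_insert ⟨Set.insert_subset hvA hSA,
        hS.prop.2.insert fun w hw _ ↦ hall w hw⟩)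
    push Not at hSN
    obtain ⟨w, hw, hvw⟩ := hSN
    refine ⟨u, hu, w, hw, ?_⟩
    rw [(hk u (hSA hu)).2 hvu, ne_comm, Ne, hk w (hSA hw)]
    exact hvw
  · push Not at hN
    refine hc (hS.mono (fun T hT ↦ ⟨hT.1.trans Set.sdiff_subset, hT.2⟩) ⟨?_, hS.prop.2⟩) hS2
    rintro u hu
    refine ⟨hSA hu, ?_⟩
    rintro (rfl | hvu)
    exacts [hvS hu, hN u hu hvu]

lemma exists_isCliqueColouringOn_mul_le (s : ℕ) (A : Finset V) :
    ∃ K, ∃ c : V → ℕ, K * (s + 1) ≤ #A + s ^ 2 ∧ (∀ u, c u ≤ K) ∧ G.IsCliqueColouringOn A c := by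
  classical
  induction A using Finset.strongInduction with | H A ih =>
  obtain rfl | ⟨v, hvA⟩ := A.eq_empty_or_nonempty
  · exact ⟨0, fun _ ↦ 0, by simp, fun _ ↦ le_rfl, by simpa using isCliqueColouringOn_empty⟩
  set N := A.filter (G.Adj v)
  by_cases hdeg : s ≤ #N
  · have hNA : insert v N ⊆ A := insert_subset hvA (filter_subset _ _)
    have hcard := card_sdiff_add_card_eq_card hNA
    rw [card_insert_of_notMem (by simp [N])] at hcard
    obtain ⟨K, c, hK, hcK, hc⟩ := ih _ (sdiff_ssubset hNA ⟨v, mem_insert_self v N⟩)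
    have hA' : (↑(A \ insert v N) : Set V) = ↑A \ insert v (G.neighborSet v) := by
      ext u
      simp only [N, coe_sdiff, coe_insert, coe_filter, Set.mem_sdiff, Set.mem_insert_iff,
        Set.mem_ofPred_eq, mem_coe, mem_neighborSet]
      tauto
    rw [hA'] at hc
    refine ⟨K + 1, fun u ↦ if G.Adj v u then K + 1 else c u, by nlinarith, fun u ↦ ?_, ?_⟩
    · dsimp only
      split_ifs
      exacts [le_rfl, (hcK u).trans K.le_succ]
    refine (hc.congr ?_).of_diff_insert_neighborSet (k := K + 1) hvA fun u _ ↦ ?_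
    · exact fun u hu ↦ if_neg fun h ↦ hu.2 (Or.inr h)
    · split_ifs with h
      · simpa using h
      · simpa [h] using ((hcK u).trans_lt K.lt_succ_self).ne
  · obtain ⟨K, c, hK, hcK, hc⟩ := ih (A.erase v) (erase_ssubset hvA)
    obtain ⟨x, hxT, hxN⟩ := (N.image c).exists_le_card_notMem
    have hx : x ≤ #N := hxT.trans card_image_le
    refine ⟨max K #N, Function.update c v x, ?_, fun u ↦ ?_, ?_⟩
    · have := card_filter_le A (G.Adj v)
      have := card_erase_le (s := A) (a := v)
      rcases max_cases K #N with ⟨h, -⟩ | ⟨h, -⟩ <;> rw [h] <;> nlinarith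
    · rcases eq_or_ne u v with rfl | huv
      · simpa using Or.inr hx
      · simpa [huv] using Or.inl (hcK u)
    rw [coe_erase] at hc
    exact hc.update fun u hu hvu h ↦ hxN (h ▸ mem_image_of_mem c (mem_filter.2 ⟨hu, hvu⟩))

end SimpleGraph

lemma cliqueChromNum_le_of_isCliqueColouringOn_univ {V : Type*} {G : SimpleGraph V} {K : ℕ}
    {c : V → ℕ} (hcK : ∀ u, c u ≤ K) (hc : G.IsCliqueColouringOn Set.univ c) :
    cliqueChromNum G ≤ K + 1 := by
  refine Nat.sInf_le ⟨fun u ↦ ⟨c u, Nat.lt_succ_of_le (hcK u)⟩, fun S hS hS2 ⟨a, ha⟩ ↦ ?_⟩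
  have hS2 : S.Nontrivial := (Set.one_lt_ncard_iff_nontrivial_and_finite.1 hS2).1
  obtain ⟨u, hu, w, hw, hne⟩ := hc (by simpa using hS) hS2
  exact hne (congrArg Fin.val ((ha u hu).trans (ha w hw).symm))

/-- With `s = ⌊√n⌋`: `(K + 1)(s + 1) ≤ n + (s + 1)² - s ≤ 2√n (s + 1)`, as `(s + 1 - √n)² ≤ 1 ≤ s`. -/
lemma add_one_le_two_sqrt_of_mul_le {n K : ℕ} (hn : 1 ≤ n)
    (hK : K * (Nat.sqrt n + 1) ≤ n + Nat.sqrt n ^ 2) : (K + 1 : ℝ) ≤ 2 * √n := by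
  have hs : (1 : ℝ) ≤ Nat.sqrt n := by exact_mod_cast Nat.sqrt_pos.2 hn
  have hsr : (Nat.sqrt n : ℝ) ≤ √n := Real.nat_sqrt_le_real_sqrt
  have hrs : √n < Nat.sqrt n + 1 := Real.real_sqrt_lt_nat_sqrt_succ
  have hr : √(n : ℝ) ^ 2 = n := Real.sq_sqrt n.cast_nonneg
  have hK' : (K : ℝ) * (Nat.sqrt n + 1) ≤ n + (Nat.sqrt n : ℝ) ^ 2 := by exact_mod_cast hK
  nlinarith

/-- Every graph on `n ≥ 1` vertices has clique chromatic number at most `2√n`. -/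
theorem cliqueChromNum_le_two_sqrt {V : Type*} [Fintype V] (G : SimpleGraph V)
    (h : 1 ≤ Fintype.card V) :
    (cliqueChromNum G : ℝ) ≤ 2 * Real.sqrt (Fintype.card V) := by
  obtain ⟨K, c, hK, hcK, hc⟩ :=
    G.exists_isCliqueColouringOn_mul_le (Nat.sqrt (Fintype.card V)) Finset.univ
  rw [Finset.card_univ] at hK
  rw [Finset.coe_univ] at hc
  calc (cliqueChromNum G : ℝ) ≤ K + 1 := by
        exact_mod_cast cliqueChromNum_le_of_isCliqueColouringOn_univ hcK hc
    _ ≤ 2 * √(Fintype.card V) := add_one_le_two_sqrt_of_mul_le h hK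
end
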